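/- Invertibility of fe on normal forms: fe is injective on FEL Normal Forms, i.e., for all P, Q in FNF, if fe(P) = fe(Q) then P and Q are syntactically identical (the paper proves this by constructing an explicit inverse g with g(fe(P)) ≡ P for all P ∈ FNF). -/
import Mathlib


/-! Shared definitions for left-sequential logics (FEL and SCL),
    evaluation trees, and decompositions. -/

/-- FEL-terms over atoms `A` (`and` = full left-sequential conjunction `∧•`,
    `or` = full left-sequential disjunction `∨•`). -/
inductive FTerm (A : Type) : Type
  | atom : A → FTerm A
  | tru  : FTerm A
  | fls  : FTerm A
  | neg  : FTerm A → FTerm A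
  | and  : FTerm A → FTerm A → FTerm A
  | or   : FTerm A → FTerm A → FTerm A

/-- SCL-terms over atoms `A` (`and` = short-circuit conjunction `∧◦`,
    `or` = short-circuit disjunction `∨◦`). -/
inductive STerm (A : Type) : Type
  | atom : A → STerm A
  | tru  : STerm A
  | fls  : STerm A
  | neg  : STerm A → STerm A
  | and  : STerm A → STerm A → STerm A
  | or   : STerm A → STerm A → STerm A

/-- Evaluation trees: finite binary trees over `A` with leaves `T`, `F`. -/
inductive ETree (A : Type) : Type
  | tru  : ETree A
  | fls  : ETree A
  | node : ETree A → A → ETree A → ETree A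

namespace ETree

/-- `X.subst Y Z = X[T↦Y, F↦Z]`. -/
def subst {A : Type} : ETree A → ETree A → ETree A → ETree A
  | .tru, y, _ => y
  | .fls, _, z => z
  | .node l a r, y, z => .node (subst l y z) a (subst r y z)

def hasTru {A : Type} : ETree A → Prop
  | .tru => True
  | .fls => False
  | .node l _ r => hasTru l ∨ hasTru r

def hasFls {A : Type} : ETree A → Prop
  | .tru => False
  | .fls => True
  | .node l _ r => hasFls l ∨ hasFls r

def depth {A : Type} : ETree A → ℕ
  | .tru => 0
  | .fls => 0
  | .node l _ r => 1 + max (depth l) (depth r)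

end ETree

/-- The full evaluation function `fe : FTerm → 𝒯`. -/
def fe {A : Type} : FTerm A → ETree A
  | FTerm.tru => ETree.tru
  | FTerm.fls => ETree.fls
  | FTerm.atom a => ETree.node ETree.tru a ETree.fls
  | FTerm.neg p => (fe p).subst ETree.fls ETree.tru
  | FTerm.and p q => (fe p).subst (fe q) ((fe q).subst ETree.fls ETree.fls)
  | FTerm.or p q => (fe p).subst ((fe q).subst ETree.tru ETree.tru) (fe q)

/-- The short-circuit evaluation function `se : STerm → 𝒯`. -/
def se {A : Type} : STerm A → ETree A
  | STerm.tru => ETree.tru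
  | STerm.fls => ETree.fls
  | STerm.atom a => ETree.node ETree.tru a ETree.fls
  | STerm.neg p => (se p).subst ETree.fls ETree.tru
  | STerm.and p q => (se p).subst (se q) ETree.fls
  | STerm.or p q => (se p).subst ETree.tru (se q)

/-- Derivability from EqFFEL by equational logic. -/
inductive EqFFEL {A : Type} : FTerm A → FTerm A → Prop
  | refl (p : FTerm A) : EqFFEL p p
  | symm {p q : FTerm A} : EqFFEL p q → EqFFEL q p
  | trans {p q r : FTerm A} : EqFFEL p q → EqFFEL q r → EqFFEL p r
  | neg_congr {p q : FTerm A} : EqFFEL p q → EqFFEL (FTerm.neg p) (FTerm.neg q)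
  | and_congr {p p' q q' : FTerm A} :
      EqFFEL p p' → EqFFEL q q' → EqFFEL (FTerm.and p q) (FTerm.and p' q')
  | or_congr {p p' q q' : FTerm A} :
      EqFFEL p p' → EqFFEL q q' → EqFFEL (FTerm.or p q) (FTerm.or p' q')
  | fel1 : EqFFEL FTerm.fls (FTerm.neg FTerm.tru)
  | fel2 (x y : FTerm A) : EqFFEL (FTerm.or x y) (FTerm.neg (FTerm.and (FTerm.neg x) (FTerm.neg y)))
  | fel3 (x : FTerm A) : EqFFEL (FTerm.neg (FTerm.neg x)) x
  | fel4 (x y z : FTerm A) : EqFFEL (FTerm.and (FTerm.and x y) z) (FTerm.and x (FTerm.and y z))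
  | fel5 (x : FTerm A) : EqFFEL (FTerm.and FTerm.tru x) x
  | fel6 (x : FTerm A) : EqFFEL (FTerm.and x FTerm.tru) x
  | fel7 (x : FTerm A) : EqFFEL (FTerm.and x FTerm.fls) (FTerm.and FTerm.fls x)
  | fel8 (x : FTerm A) : EqFFEL (FTerm.and x FTerm.fls) (FTerm.and (FTerm.neg x) FTerm.fls)
  | fel9 (x y : FTerm A) :
      EqFFEL (FTerm.or (FTerm.and x FTerm.fls) y) (FTerm.and (FTerm.or x FTerm.tru) y)
  | fel10 (x y : FTerm A) :
      EqFFEL (FTerm.or x (FTerm.and y FTerm.fls)) (FTerm.and x (FTerm.or y FTerm.tru))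

/-- Derivability from EqFSCL by equational logic. -/
inductive EqFSCL {A : Type} : STerm A → STerm A → Prop
  | refl (p : STerm A) : EqFSCL p p
  | symm {p q : STerm A} : EqFSCL p q → EqFSCL q p
  | trans {p q r : STerm A} : EqFSCL p q → EqFSCL q r → EqFSCL p r
  | neg_congr {p q : STerm A} : EqFSCL p q → EqFSCL (STerm.neg p) (STerm.neg q)
  | and_congr {p p' q q' : STerm A} :
      EqFSCL p p' → EqFSCL q q' → EqFSCL (STerm.and p q) (STerm.and p' q')
  | or_congr {p p' q q' : STerm A} :
      EqFSCL p p' → EqFSCL q q' → EqFSCL (STerm.or p q) (STerm.or p' q')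
  | scl1 : EqFSCL STerm.fls (STerm.neg STerm.tru)
  | scl2 (x y : STerm A) : EqFSCL (STerm.or x y) (STerm.neg (STerm.and (STerm.neg x) (STerm.neg y)))
  | scl3 (x : STerm A) : EqFSCL (STerm.neg (STerm.neg x)) x
  | scl4 (x y z : STerm A) : EqFSCL (STerm.and (STerm.and x y) z) (STerm.and x (STerm.and y z))
  | scl5 (x : STerm A) : EqFSCL (STerm.and STerm.tru x) x
  | scl6 (x : STerm A) : EqFSCL (STerm.and x STerm.tru) x
  | scl7 (x : STerm A) : EqFSCL (STerm.and STerm.fls x) STerm.fls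
  | scl8 (x : STerm A) : EqFSCL (STerm.and x STerm.fls) (STerm.and (STerm.neg x) STerm.fls)
  | scl9 (x y : STerm A) :
      EqFSCL (STerm.or (STerm.and x STerm.fls) y) (STerm.and (STerm.or x STerm.tru) y)
  | scl10 (x y z : STerm A) :
      EqFSCL (STerm.or (STerm.and x y) (STerm.and z STerm.fls))
             (STerm.and (STerm.or x (STerm.and z STerm.fls)) (STerm.or y (STerm.and z STerm.fls)))

/-! ### FEL Normal Form grammar -/

/-- T-terms: `P^T ::= T | a ∨• P^T`. -/
inductive IsFT_T {A : Type} : FTerm A → Prop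
  | tru : IsFT_T FTerm.tru
  | or (a : A) {p : FTerm A} : IsFT_T p → IsFT_T (FTerm.or (FTerm.atom a) p)

/-- F-terms: `P^F ::= F | a ∧• P^F`. -/
inductive IsFT_F {A : Type} : FTerm A → Prop
  | fls : IsFT_F FTerm.fls
  | and (a : A) {p : FTerm A} : IsFT_F p → IsFT_F (FTerm.and (FTerm.atom a) p)

/-- ℓ-terms: `P^ℓ ::= a ∧• P^T | ¬a ∧• P^T`. -/
inductive IsFT_L {A : Type} : FTerm A → Prop
  | pos (a : A) {p : FTerm A} : IsFT_T p → IsFT_L (FTerm.and (FTerm.atom a) p)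
  | neg (a : A) {p : FTerm A} : IsFT_T p → IsFT_L (FTerm.and (FTerm.neg (FTerm.atom a)) p)

mutual
/-- `P^c ::= P^ℓ | P^* ∧• P^d`. -/
inductive IsFT_C {A : Type} : FTerm A → Prop
  | ell {p : FTerm A} : IsFT_L p → IsFT_C p
  | and {p q : FTerm A} : IsFT_Star p → IsFT_D q → IsFT_C (FTerm.and p q)
/-- `P^d ::= P^ℓ | P^* ∨• P^c`. -/
inductive IsFT_D {A : Type} : FTerm A → Prop
  | ell {p : FTerm A} : IsFT_L p → IsFT_D p
  | or {p q : FTerm A} : IsFT_Star p → IsFT_C q → IsFT_D (FTerm.or p q)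
/-- `P^* ::= P^c | P^d`. -/
inductive IsFT_Star {A : Type} : FTerm A → Prop
  | c {p : FTerm A} : IsFT_C p → IsFT_Star p
  | d {p : FTerm A} : IsFT_D p → IsFT_Star p
end

/-- FEL Normal Form: `P ::= P^T | P^F | P^T ∧• P^*`. -/
inductive IsFNF {A : Type} : FTerm A → Prop
  | t {p : FTerm A} : IsFT_T p → IsFNF p
  | f {p : FTerm A} : IsFT_F p → IsFNF p
  | ts {p q : FTerm A} : IsFT_T p → IsFT_Star q → IsFNF (FTerm.and p q)

/-! ### SCL Normal Form grammar -/

/-- T-terms: `P^T ::= T | (a ∧◦ P^T) ∨◦ P^T`. -/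
inductive IsST_T {A : Type} : STerm A → Prop
  | tru : IsST_T STerm.tru
  | or (a : A) {p q : STerm A} :
      IsST_T p → IsST_T q → IsST_T (STerm.or (STerm.and (STerm.atom a) p) q)

/-- F-terms: `P^F ::= F | (a ∨◦ P^F) ∧◦ P^F`. -/
inductive IsST_F {A : Type} : STerm A → Prop
  | fls : IsST_F STerm.fls
  | and (a : A) {p q : STerm A} :
      IsST_F p → IsST_F q → IsST_F (STerm.and (STerm.or (STerm.atom a) p) q)

/-- ℓ-terms: `P^ℓ ::= (a ∧◦ P^T) ∨◦ P^F | (¬a ∧◦ P^T) ∨◦ P^F`. -/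
inductive IsST_L {A : Type} : STerm A → Prop
  | pos (a : A) {p q : STerm A} :
      IsST_T p → IsST_F q → IsST_L (STerm.or (STerm.and (STerm.atom a) p) q)
  | neg (a : A) {p q : STerm A} :
      IsST_T p → IsST_F q → IsST_L (STerm.or (STerm.and (STerm.neg (STerm.atom a)) p) q)

mutual
/-- `P^c ::= P^ℓ | P^* ∧◦ P^d`. -/
inductive IsST_C {A : Type} : STerm A → Prop
  | ell {p : STerm A} : IsST_L p → IsST_C p
  | and {p q : STerm A} : IsST_Star p → IsST_D q → IsST_C (STerm.and p q)
/-- `P^d ::= P^ℓ | P^* ∨◦ P^c`. -/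
inductive IsST_D {A : Type} : STerm A → Prop
  | ell {p : STerm A} : IsST_L p → IsST_D p
  | or {p q : STerm A} : IsST_Star p → IsST_C q → IsST_D (STerm.or p q)
/-- `P^* ::= P^c | P^d`. -/
inductive IsST_Star {A : Type} : STerm A → Prop
  | c {p : STerm A} : IsST_C p → IsST_Star p
  | d {p : STerm A} : IsST_D p → IsST_Star p
end

/-- SCL Normal Form: `P ::= P^T | P^F | P^T ∧◦ P^*`. -/
inductive IsSNF {A : Type} : STerm A → Prop
  | t {p : STerm A} : IsST_T p → IsSNF p
  | f {p : STerm A} : IsST_F p → IsSNF p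
  | ts {p q : STerm A} : IsST_T p → IsST_Star q → IsSNF (STerm.and p q)

/-! ### Trees with box leaves -/

/-- `𝒯_□`: trees over `A` with leaves in `{T, F, □}`. -/
inductive ETreeB (A : Type) : Type
  | tru  : ETreeB A
  | fls  : ETreeB A
  | box  : ETreeB A
  | node : ETreeB A → A → ETreeB A → ETreeB A

namespace ETreeB

/-- `X.substBox Y = X[□↦Y]`. -/
def substBox {A : Type} : ETreeB A → ETree A → ETree A
  | .tru, _ => ETree.tru
  | .fls, _ => ETree.fls
  | .box, y => y
  | .node l a r, y => ETree.node (substBox l y) a (substBox r y)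

def hasBox {A : Type} : ETreeB A → Prop
  | .tru => False
  | .fls => False
  | .box => True
  | .node l _ r => hasBox l ∨ hasBox r

def hasTru {A : Type} : ETreeB A → Prop
  | .tru => True
  | .fls => False
  | .box => False
  | .node l _ r => hasTru l ∨ hasTru r

def hasFls {A : Type} : ETreeB A → Prop
  | .tru => False
  | .fls => True
  | .box => False
  | .node l _ r => hasFls l ∨ hasFls r

end ETreeB

/-- `𝒯_{1,2}`: trees over `A` with leaves in `{T, F, □₁, □₂}`. -/
inductive ETree2 (A : Type) : Type
  | tru  : ETree2 A
  | fls  : ETree2 A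
  | box1 : ETree2 A
  | box2 : ETree2 A
  | node : ETree2 A → A → ETree2 A → ETree2 A

namespace ETree2

/-- `X.substBoxes Y Z = X[□₁↦Y, □₂↦Z]`. -/
def substBoxes {A : Type} : ETree2 A → ETree A → ETree A → ETree A
  | .tru, _, _ => ETree.tru
  | .fls, _, _ => ETree.fls
  | .box1, y, _ => y
  | .box2, _, z => z
  | .node l a r, y, z => ETree.node (substBoxes l y z) a (substBoxes r y z)

def hasBox1 {A : Type} : ETree2 A → Prop
  | .tru => False
  | .fls => False
  | .box1 => True
  | .box2 => False
  | .node l _ r => hasBox1 l ∨ hasBox1 r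

def hasBox2 {A : Type} : ETree2 A → Prop
  | .tru => False
  | .fls => False
  | .box1 => False
  | .box2 => True
  | .node l _ r => hasBox2 l ∨ hasBox2 r

def hasTru {A : Type} : ETree2 A → Prop
  | .tru => True
  | .fls => False
  | .box1 => False
  | .box2 => False
  | .node l _ r => hasTru l ∨ hasTru r

def hasFls {A : Type} : ETree2 A → Prop
  | .tru => False
  | .fls => True
  | .box1 => False
  | .box2 => False
  | .node l _ r => hasFls l ∨ hasFls r

end ETree2

namespace ETree

/-- `X[T↦□₁, F↦□₂]`. -/
def toBoxes {A : Type} : ETree A → ETree2 A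
  | .tru => ETree2.box1
  | .fls => ETree2.box2
  | .node l a r => ETree2.node (toBoxes l) a (toBoxes r)

/-- `X[T↦□]`. -/
def truToBox {A : Type} : ETree A → ETreeB A
  | .tru => ETreeB.box
  | .fls => ETreeB.fls
  | .node l a r => ETreeB.node (truToBox l) a (truToBox r)

/-- `X[F↦□]`. -/
def flsToBox {A : Type} : ETree A → ETreeB A
  | .tru => ETreeB.tru
  | .fls => ETreeB.box
  | .node l a r => ETreeB.node (flsToBox l) a (flsToBox r)

end ETree

/-! ### FEL decompositions -/

/-- Candidate conjunction decomposition (FEL):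
    `X = Y[□₁↦Z, □₂↦Z[T↦F]]`, `Y` contains both boxes, neither `T` nor `F`,
    and `Z` contains both `T` and `F`. -/
def IsCcdF {A : Type} (X : ETree A) (Y : ETree2 A) (Z : ETree A) : Prop :=
  X = Y.substBoxes Z (Z.subst ETree.fls ETree.fls) ∧
  Y.hasBox1 ∧ Y.hasBox2 ∧ ¬ Y.hasTru ∧ ¬ Y.hasFls ∧ Z.hasTru ∧ Z.hasFls

/-- Candidate disjunction decomposition (FEL):
    `X = Y[□₁↦Z[F↦T], □₂↦Z]` with the same side conditions. -/
def IsCddF {A : Type} (X : ETree A) (Y : ETree2 A) (Z : ETree A) : Prop :=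
  X = Y.substBoxes (Z.subst ETree.tru ETree.tru) Z ∧
  Y.hasBox1 ∧ Y.hasBox2 ∧ ¬ Y.hasTru ∧ ¬ Y.hasFls ∧ Z.hasTru ∧ Z.hasFls

/-- Conjunction decomposition (FEL): a ccd with `Z` of minimal depth. -/
def IsCdF {A : Type} (X : ETree A) (Y : ETree2 A) (Z : ETree A) : Prop :=
  IsCcdF X Y Z ∧ ∀ (Y' : ETree2 A) (Z' : ETree A), IsCcdF X Y' Z' → Z.depth ≤ Z'.depth

/-- Disjunction decomposition (FEL): a cdd with `Z` of minimal depth. -/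
def IsDdF {A : Type} (X : ETree A) (Y : ETree2 A) (Z : ETree A) : Prop :=
  IsCddF X Y Z ∧ ∀ (Y' : ETree2 A) (Z' : ETree A), IsCddF X Y' Z' → Z.depth ≤ Z'.depth

/-- T-*-decomposition (FEL): `X = Y[□↦Z]`, `Y` contains neither `T` nor `F`,
    and `Z` admits no nontrivial box decomposition. -/
def IsTsdF {A : Type} (X : ETree A) (Y : ETreeB A) (Z : ETree A) : Prop :=
  X = Y.substBox Z ∧ ¬ Y.hasTru ∧ ¬ Y.hasFls ∧
  ¬ ∃ (U : ETreeB A) (V : ETree A),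
      Z = U.substBox V ∧ U.hasBox ∧ U ≠ ETreeB.box ∧ ¬ U.hasTru ∧ ¬ U.hasFls

/-! ### SCL decompositions -/

/-- Candidate conjunction decomposition (SCL): `X = Y[□↦Z]`, `Y` contains `□`,
    `Y` contains `F` but not `T`, and `Z` contains both `T` and `F`. -/
def IsCcdS {A : Type} (X : ETree A) (Y : ETreeB A) (Z : ETree A) : Prop :=
  X = Y.substBox Z ∧ Y.hasBox ∧ Y.hasFls ∧ ¬ Y.hasTru ∧ Z.hasTru ∧ Z.hasFls

/-- Candidate disjunction decomposition (SCL): `X = Y[□↦Z]`, `Y` contains `□`,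
    `Y` contains `T` but not `F`, and `Z` contains both `T` and `F`. -/
def IsCddS {A : Type} (X : ETree A) (Y : ETreeB A) (Z : ETree A) : Prop :=
  X = Y.substBox Z ∧ Y.hasBox ∧ Y.hasTru ∧ ¬ Y.hasFls ∧ Z.hasTru ∧ Z.hasFls

/-- Conjunction decomposition (SCL): a ccd with `Z` of minimal depth. -/
def IsCdS {A : Type} (X : ETree A) (Y : ETreeB A) (Z : ETree A) : Prop :=
  IsCcdS X Y Z ∧ ∀ (Y' : ETreeB A) (Z' : ETree A), IsCcdS X Y' Z' → Z.depth ≤ Z'.depth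

/-- Disjunction decomposition (SCL): a cdd with `Z` of minimal depth. -/
def IsDdS {A : Type} (X : ETree A) (Y : ETreeB A) (Z : ETree A) : Prop :=
  IsCddS X Y Z ∧ ∀ (Y' : ETreeB A) (Z' : ETree A), IsCddS X Y' Z' → Z.depth ≤ Z'.depth

/-- Candidate T-*-decomposition (SCL). -/
def IsCtsdS {A : Type} (X : ETree A) (Y : ETreeB A) (Z : ETree A) : Prop :=
  X = Y.substBox Z ∧ ¬ Y.hasTru ∧ ¬ Y.hasFls ∧
  ¬ ∃ (U : ETreeB A) (V : ETree A),
      Z = U.substBox V ∧ U.hasBox ∧ U ≠ ETreeB.box ∧ ¬ U.hasTru ∧ ¬ U.hasFls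

/-- T-*-decomposition (SCL): a ctsd with `Z` of minimal depth. -/
def IsTsdS {A : Type} (X : ETree A) (Y : ETreeB A) (Z : ETree A) : Prop :=
  IsCtsdS X Y Z ∧ ∀ (Y' : ETreeB A) (Z' : ETree A), IsCtsdS X Y' Z' → Z.depth ≤ Z'.depth

/-- The translation `h : FTerm → STerm` from FEL-terms to SCL-terms. -/
def hTrans {A : Type} : FTerm A → STerm A
  | FTerm.tru => STerm.tru
  | FTerm.fls => STerm.fls
  | FTerm.atom a => STerm.atom a
  | FTerm.neg p => STerm.neg (hTrans p)
  | FTerm.and p q => STerm.and (STerm.or (hTrans p) (STerm.and (hTrans q) STerm.fls)) (hTrans q)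
  | FTerm.or p q => STerm.or (STerm.and (hTrans p) (STerm.or (hTrans q) STerm.tru)) (hTrans q)

/-! ### Auxiliary development for injectivity of `fe` on FNF -/

namespace FEInj

variable {A : Type}

/-- Perfect trees: all leaves at uniform depth `n`. -/
inductive Perfect : ETree A → ℕ → Prop
  | tru : Perfect .tru 0
  | fls : Perfect .fls 0
  | node {l r : ETree A} (a : A) {n : ℕ} :
      Perfect l n → Perfect r n → Perfect (.node l a r) (n + 1)

/-- Subtree at a path (junk value: a leaf is returned unchanged). -/
def subAt : List Bool → ETree A → ETree A
  | [], t => t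
  | b :: p, .node l _ r => subAt p (if b then l else r)
  | _ :: _, .tru => .tru
  | _ :: _, .fls => .fls

@[simp] lemma subAt_nil (t : ETree A) : subAt [] t = t := rfl
@[simp] lemma subAt_tru (p : List Bool) : subAt p (.tru : ETree A) = .tru := by
  cases p <;> rfl
@[simp] lemma subAt_fls (p : List Bool) : subAt p (.fls : ETree A) = .fls := by
  cases p <;> rfl
@[simp] lemma subAt_cons (b : Bool) (p : List Bool) (l r : ETree A) (a : A) :
    subAt (b :: p) (.node l a r) = subAt p (if b then l else r) := rfl

lemma subAt_append (p q : List Bool) (t : ETree A) :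
    subAt (p ++ q) t = subAt q (subAt p t) := by
  induction p generalizing t with
  | nil => rfl
  | cons b p ih =>
    cases t with
    | tru => simp
    | fls => simp
    | node l a r => simp only [List.cons_append, subAt_cons]; exact ih _

@[simp] lemma hasTru_tru : (ETree.tru : ETree A).hasTru ↔ True := Iff.rfl
@[simp] lemma hasTru_fls : (ETree.fls : ETree A).hasTru ↔ False := Iff.rfl
@[simp] lemma hasTru_node (l r : ETree A) (a : A) :
    (ETree.node l a r).hasTru ↔ l.hasTru ∨ r.hasTru := Iff.rfl
@[simp] lemma hasFls_tru : (ETree.tru : ETree A).hasFls ↔ False := Iff.rfl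
@[simp] lemma hasFls_fls : (ETree.fls : ETree A).hasFls ↔ True := Iff.rfl
@[simp] lemma hasFls_node (l r : ETree A) (a : A) :
    (ETree.node l a r).hasFls ↔ l.hasFls ∨ r.hasFls := Iff.rfl

@[simp] lemma subst_tru (y z : ETree A) : (ETree.tru).subst y z = y := rfl
@[simp] lemma subst_fls (y z : ETree A) : (ETree.fls).subst y z = z := rfl
@[simp] lemma subst_node (l r y z : ETree A) (a : A) :
    (ETree.node l a r).subst y z = .node (l.subst y z) a (r.subst y z) := rfl

lemma hasTru_of_subAt_tru {p : List Bool} {t : ETree A}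
    (h : subAt p t = .tru) : t.hasTru := by
  induction p generalizing t with
  | nil => subst h; trivial
  | cons b p ih =>
    cases t with
    | tru => trivial
    | fls => simp at h
    | node l a r =>
      simp only [subAt_cons] at h
      cases b with
      | true => exact Or.inl (ih h)
      | false => exact Or.inr (ih h)

lemma hasFls_of_subAt_fls {p : List Bool} {t : ETree A}
    (h : subAt p t = .fls) : t.hasFls := by
  induction p generalizing t with
  | nil => subst h; trivial
  | cons b p ih =>
    cases t with
    | tru => simp at h
    | fls => trivial
    | node l a r =>
      simp only [subAt_cons] at h
      cases b with
      | true => exact Or.inl (ih h)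
      | false => exact Or.inr (ih h)

lemma not_hasTru_subAt {t : ETree A} (h : ¬ t.hasTru) (p : List Bool) :
    ¬ (subAt p t).hasTru := by
  induction p generalizing t with
  | nil => exact h
  | cons b p ih =>
    cases t with
    | tru => exact absurd trivial h
    | fls => simpa using h
    | node l a r =>
      simp only [hasTru_node] at h
      push_neg at h
      simp only [subAt_cons]
      cases b with
      | true => exact ih h.1
      | false => exact ih h.2

lemma not_hasFls_subAt {t : ETree A} (h : ¬ t.hasFls) (p : List Bool) :
    ¬ (subAt p t).hasFls := by
  induction p generalizing t with
  | nil => exact h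
  | cons b p ih =>
    cases t with
    | tru => simpa using h
    | fls => exact absurd trivial h
    | node l a r =>
      simp only [hasFls_node] at h
      push_neg at h
      simp only [subAt_cons]
      cases b with
      | true => exact ih h.1
      | false => exact ih h.2

/-- Every tree has a leaf. -/
lemma hasTru_or_hasFls (t : ETree A) : t.hasTru ∨ t.hasFls := by
  induction t with
  | tru => exact Or.inl trivial
  | fls => exact Or.inr trivial
  | node l a r ihl ihr =>
    rcases ihl with h | h
    · exact Or.inl (Or.inl h)
    · exact Or.inr (Or.inl h)

lemma hasTru_subst_left {x y : ETree A} (hx : x.hasTru) (hy : y.hasTru)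
    (z : ETree A) : (x.subst y z).hasTru := by
  induction x with
  | tru => exact hy
  | fls => cases hx
  | node l a r ihl ihr =>
    rcases hx with h | h
    · exact Or.inl (ihl h)
    · exact Or.inr (ihr h)

lemma hasTru_subst_right {x z : ETree A} (hx : x.hasFls) (hz : z.hasTru)
    (y : ETree A) : (x.subst y z).hasTru := by
  induction x with
  | tru => cases hx
  | fls => exact hz
  | node l a r ihl ihr =>
    rcases hx with h | h
    · exact Or.inl (ihl h)
    · exact Or.inr (ihr h)

lemma hasFls_subst_left {x y : ETree A} (hx : x.hasTru) (hy : y.hasFls)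
    (z : ETree A) : (x.subst y z).hasFls := by
  induction x with
  | tru => exact hy
  | fls => cases hx
  | node l a r ihl ihr =>
    rcases hx with h | h
    · exact Or.inl (ihl h)
    · exact Or.inr (ihr h)

lemma hasFls_subst_right {x z : ETree A} (hx : x.hasFls) (hz : z.hasFls)
    (y : ETree A) : (x.subst y z).hasFls := by
  induction x with
  | tru => cases hx
  | fls => exact hz
  | node l a r ihl ihr =>
    rcases hx with h | h
    · exact Or.inl (ihl h)
    · exact Or.inr (ihr h)

lemma hasTru_subst_both {y z : ETree A} (hy : y.hasTru) (hz : z.hasTru)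
    (x : ETree A) : (x.subst y z).hasTru := by
  rcases hasTru_or_hasFls x with h | h
  · exact hasTru_subst_left h hy z
  · exact hasTru_subst_right h hz y

lemma hasFls_subst_both {y z : ETree A} (hy : y.hasFls) (hz : z.hasFls)
    (x : ETree A) : (x.subst y z).hasFls := by
  rcases hasTru_or_hasFls x with h | h
  · exact hasFls_subst_left h hy z
  · exact hasFls_subst_right h hz y

lemma not_hasTru_subst {y z : ETree A} (hy : ¬ y.hasTru) (hz : ¬ z.hasTru)
    (x : ETree A) : ¬ (x.subst y z).hasTru := by
  induction x with
  | tru => exact hy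
  | fls => exact hz
  | node l a r ihl ihr =>
    simp only [subst_node, hasTru_node]
    rintro (h | h)
    · exact ihl h
    · exact ihr h

lemma not_hasFls_subst {y z : ETree A} (hy : ¬ y.hasFls) (hz : ¬ z.hasFls)
    (x : ETree A) : ¬ (x.subst y z).hasFls := by
  induction x with
  | tru => exact hy
  | fls => exact hz
  | node l a r ihl ihr =>
    simp only [subst_node, hasFls_node]
    rintro (h | h)
    · exact ihl h
    · exact ihr h

@[simp] lemma not_hasTru_bar (x : ETree A) : ¬ (x.subst .fls .fls).hasTru :=
  not_hasTru_subst (by simp) (by simp) x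

@[simp] lemma hasFls_bar (x : ETree A) : (x.subst .fls .fls).hasFls :=
  hasFls_subst_both (by simp) (by simp) x

@[simp] lemma not_hasFls_star (x : ETree A) : ¬ (x.subst .tru .tru).hasFls :=
  not_hasFls_subst (by simp) (by simp) x

@[simp] lemma hasTru_star (x : ETree A) : (x.subst .tru .tru).hasTru :=
  hasTru_subst_both (by simp) (by simp) x

lemma subst_eq_self_of_not_hasFls {x : ETree A} (h : ¬ x.hasFls) (z : ETree A) :
    x.subst .tru z = x := by
  induction x with
  | tru => rfl
  | fls => exact absurd trivial h
  | node l a r ihl ihr =>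
    simp only [hasFls_node] at h
    push_neg at h
    simp [ihl h.1, ihr h.2]

lemma subst_eq_self_of_not_hasTru {x : ETree A} (h : ¬ x.hasTru) (y : ETree A) :
    x.subst y .fls = x := by
  induction x with
  | tru => exact absurd trivial h
  | fls => rfl
  | node l a r ihl ihr =>
    simp only [hasTru_node] at h
    push_neg at h
    simp [ihl h.1, ihr h.2]

end FEInj
namespace FEInj

variable {A : Type}

lemma Perfect.unique {x : ETree A} {m n : ℕ} (h1 : Perfect x m) (h2 : Perfect x n) :
    m = n := by
  induction h1 generalizing n with
  | tru => cases h2; rfl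
  | fls => cases h2; rfl
  | node a hl hr ihl ihr => cases h2 with
    | node _ hl' hr' => rw [ihl hl']

lemma Perfect.subst {x y z : ETree A} {k m : ℕ} (hx : Perfect x k)
    (hy : Perfect y m) (hz : Perfect z m) : Perfect (x.subst y z) (k + m) := by
  induction hx with
  | tru => simpa using hy
  | fls => simpa using hz
  | node a hl hr ihl ihr =>
    simp only [subst_node]
    have h : (Perfect ((ETree.node _ a _ : ETree A)) ((_ + m) + 1)) := Perfect.node a ihl ihr
    simpa [Nat.succ_add] using h

lemma Perfect.bar {x : ETree A} {m : ℕ} (hx : Perfect x m) :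
    Perfect (x.subst .fls .fls) m := by
  simpa using hx.subst Perfect.fls Perfect.fls

lemma Perfect.star {x : ETree A} {m : ℕ} (hx : Perfect x m) :
    Perfect (x.subst .tru .tru) m := by
  simpa using hx.subst Perfect.tru Perfect.tru

lemma Perfect.subAt {x : ETree A} {k : ℕ} (hx : Perfect x k) {p : List Bool}
    (hp : p.length ≤ k) : Perfect (subAt p x) (k - p.length) := by
  induction p generalizing x k with
  | nil => simpa
  | cons b p ih =>
    cases hx with
    | tru => simp at hp
    | fls => simp at hp
    | node a hl hr =>
      simp only [List.length_cons] at hp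
      have hp' : p.length ≤ _ := Nat.lt_succ_iff.mp hp
      simp only [subAt_cons, List.length_cons, Nat.succ_sub_succ]
      cases b
      · exact ih hr hp'
      · exact ih hl hp'

lemma subAt_subst {x : ETree A} {k : ℕ} (hx : Perfect x k) {p : List Bool}
    (hp : p.length ≤ k) (y z : ETree A) :
    subAt p (x.subst y z) = (subAt p x).subst y z := by
  induction p generalizing x k with
  | nil => rfl
  | cons b p ih =>
    cases hx with
    | tru => simp at hp
    | fls => simp at hp
    | node a hl hr =>
      simp only [List.length_cons] at hp
      have hp' : p.length ≤ _ := Nat.lt_succ_iff.mp hp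
      simp only [subst_node, subAt_cons]
      cases b
      · exact ih hr hp'
      · exact ih hl hp'

/-- At full depth, subtrees of a perfect tree are leaves. -/
lemma subAt_full {x : ETree A} {k : ℕ} (hx : Perfect x k) {p : List Bool}
    (hp : p.length = k) : subAt p x = .tru ∨ subAt p x = .fls := by
  induction p generalizing x k with
  | nil =>
    cases hx with
    | tru => exact Or.inl rfl
    | fls => exact Or.inr rfl
    | node a hl hr => simp at hp
  | cons b p ih =>
    cases hx with
    | tru => simp at hp
    | fls => simp at hp
    | node a hl hr =>
      simp only [List.length_cons] at hp
      simp only [subAt_cons]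
      cases b
      · exact ih hr (by omega)
      · exact ih hl (by omega)

lemma exists_tru_path {x : ETree A} {k : ℕ} (hx : Perfect x k) (h : x.hasTru) :
    ∃ p : List Bool, p.length = k ∧ subAt p x = .tru := by
  induction hx with
  | tru => exact ⟨[], rfl, rfl⟩
  | fls => cases h
  | node a hl hr ihl ihr =>
    rcases h with h | h
    · obtain ⟨p, hp, hs⟩ := ihl h
      exact ⟨true :: p, by simp [hp], by simpa using hs⟩
    · obtain ⟨p, hp, hs⟩ := ihr h
      exact ⟨false :: p, by simp [hp], by simpa using hs⟩

lemma exists_fls_path {x : ETree A} {k : ℕ} (hx : Perfect x k) (h : x.hasFls) :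
    ∃ p : List Bool, p.length = k ∧ subAt p x = .fls := by
  induction hx with
  | tru => cases h
  | fls => exact ⟨[], rfl, rfl⟩
  | node a hl hr ihl ihr =>
    rcases h with h | h
    · obtain ⟨p, hp, hs⟩ := ihl h
      exact ⟨true :: p, by simp [hp], by simpa using hs⟩
    · obtain ⟨p, hp, hs⟩ := ihr h
      exact ⟨false :: p, by simp [hp], by simpa using hs⟩

/-- A prefix of a T-path leads to a subtree containing `T`. -/
lemma exists_hasTru_sub {x : ETree A} {k d : ℕ} (hx : Perfect x k) (h : x.hasTru)
    (hd : d ≤ k) : ∃ p : List Bool, p.length = d ∧ (subAt p x).hasTru := by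
  obtain ⟨ρ, hρ, hs⟩ := exists_tru_path hx h
  refine ⟨ρ.take d, by simp [hρ, hd], ?_⟩
  have : subAt (ρ.take d ++ ρ.drop d) x = .tru := by rw [List.take_append_drop]; exact hs
  rw [subAt_append] at this
  exact hasTru_of_subAt_tru this

lemma exists_hasFls_sub {x : ETree A} {k d : ℕ} (hx : Perfect x k) (h : x.hasFls)
    (hd : d ≤ k) : ∃ p : List Bool, p.length = d ∧ (subAt p x).hasFls := by
  obtain ⟨ρ, hρ, hs⟩ := exists_fls_path hx h
  refine ⟨ρ.take d, by simp [hρ, hd], ?_⟩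
  have : subAt (ρ.take d ++ ρ.drop d) x = .fls := by rw [List.take_append_drop]; exact hs
  rw [subAt_append] at this
  exact hasFls_of_subAt_fls this

/-- Cancellation for graftings of equal depth (Lemma D). -/
lemma subst_cancel {u1 u2 y1 z1 y2 z2 : ETree A} {d : ℕ}
    (h1 : Perfect u1 d) (h2 : Perfect u2 d)
    (hne1 : y1 ≠ z2) (hne2 : z1 ≠ y2)
    (h : u1.subst y1 z1 = u2.subst y2 z2) :
    u1 = u2 ∧ (u1.hasTru → y1 = y2) ∧ (u1.hasFls → z1 = z2) := by
  induction h1 generalizing u2 with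
  | tru =>
    cases h2 with
    | tru => exact ⟨rfl, fun _ => h, fun hf => absurd hf (by simp)⟩
    | fls => exact absurd h hne1
  | fls =>
    cases h2 with
    | tru => exact absurd h (by simpa [eq_comm] using hne2)
    | fls => exact ⟨rfl, fun ht => absurd ht (by simp), fun _ => h⟩
  | node a hl hr ihl ihr =>
    cases h2 with
    | node a' hl' hr' =>
      simp only [subst_node, ETree.node.injEq] at h
      obtain ⟨hL, ha, hR⟩ := h
      obtain ⟨e1, t1, f1⟩ := ihl hl' hL
      obtain ⟨e2, t2, f2⟩ := ihr hr' hR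
      subst e1 e2 ha
      exact ⟨rfl, fun ht => ht.elim t1 t2,
        fun hf => hf.elim f1 f2⟩

end FEInj
namespace FEInj

variable {A : Type}

lemma fe_and (p q : FTerm A) :
    fe (.and p q) = (fe p).subst (fe q) ((fe q).subst .fls .fls) := rfl

lemma fe_or (p q : FTerm A) :
    fe (.or p q) = (fe p).subst ((fe q).subst .tru .tru) (fe q) := rfl

lemma fe_ell_pos (a : A) (t : FTerm A) :
    fe (.and (.atom a) t) = .node (fe t) a ((fe t).subst .fls .fls) := rfl

lemma fe_ell_neg (a : A) (t : FTerm A) :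
    fe (.and (.neg (.atom a)) t) = .node ((fe t).subst .fls .fls) a (fe t) := rfl

lemma fe_or_atom (a : A) (t : FTerm A) :
    fe (.or (.atom a) t) = .node ((fe t).subst .tru .tru) a (fe t) := rfl

/-- Facts about `fe` of T-terms. -/
lemma feT_facts {t : FTerm A} (h : IsFT_T t) :
    (fe t).hasTru ∧ ¬ (fe t).hasFls ∧ ∃ d, Perfect (fe t) d := by
  induction h with
  | tru => exact ⟨trivial, fun h => h, 0, Perfect.tru⟩
  | or a h ih =>
    obtain ⟨h1, h2, d, h3⟩ := ih
    rw [fe_or_atom]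
    refine ⟨Or.inl (by simpa using hasTru_star _), ?_, d + 1, ?_⟩
    · simp only [hasFls_node]
      rintro (hf | hf)
      · exact not_hasFls_star _ hf
      · exact h2 hf
    · exact Perfect.node a h3.star h3

/-- Facts about `fe` of F-terms. -/
lemma feF_facts {t : FTerm A} (h : IsFT_F t) :
    (fe t).hasFls ∧ ¬ (fe t).hasTru ∧ ∃ d, Perfect (fe t) d := by
  induction h with
  | fls => exact ⟨trivial, fun h => h, 0, Perfect.fls⟩
  | and a h ih =>
    obtain ⟨h1, h2, d, h3⟩ := ih
    rw [fe_ell_pos]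
    refine ⟨Or.inl h1, ?_, d + 1, ?_⟩
    · simp only [hasTru_node]
      rintro (hf | hf)
      · exact h2 hf
      · exact not_hasTru_bar _ hf
    · exact Perfect.node a h3 h3.bar

lemma ell_shape {p : FTerm A} (h : IsFT_L p) :
    ∃ a t, IsFT_T t ∧
      (p = .and (.atom a) t ∨ p = .and (.neg (.atom a)) t) := by
  cases h with
  | pos a ht => exact ⟨a, _, ht, Or.inl rfl⟩
  | neg a ht => exact ⟨a, _, ht, Or.inr rfl⟩

lemma star_shape {p : FTerm A} (h : IsFT_Star p) :
    IsFT_L p ∨ (∃ r s, p = .and r s ∧ IsFT_Star r ∧ IsFT_D s) ∨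
      (∃ r s, p = .or r s ∧ IsFT_Star r ∧ IsFT_C s) := by
  cases h with
  | c hc =>
    cases hc with
    | ell hl => exact Or.inl hl
    | and hs hd => exact Or.inr (Or.inl ⟨_, _, rfl, hs, hd⟩)
  | d hd =>
    cases hd with
    | ell hl => exact Or.inl hl
    | or hs hc => exact Or.inr (Or.inr ⟨_, _, rfl, hs, hc⟩)

lemma d_shape {p : FTerm A} (h : IsFT_D p) :
    IsFT_L p ∨ ∃ r s, p = .or r s ∧ IsFT_Star r ∧ IsFT_C s := by
  cases h with
  | ell hl => exact Or.inl hl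
  | or hs hc => exact Or.inr ⟨_, _, rfl, hs, hc⟩

lemma c_shape {p : FTerm A} (h : IsFT_C p) :
    IsFT_L p ∨ ∃ r s, p = .and r s ∧ IsFT_Star r ∧ IsFT_D s := by
  cases h with
  | ell hl => exact Or.inl hl
  | and hs hd => exact Or.inr ⟨_, _, rfl, hs, hd⟩

lemma ell_fe {p : FTerm A} (h : IsFT_L p) :
    ∃ (a : A) (X Y : ETree A) (m : ℕ),
      fe p = .node X a Y ∧ Perfect X m ∧ Perfect Y m ∧
      ((X.hasTru ∧ ¬ X.hasFls ∧ ¬ Y.hasTru ∧ Y.hasFls) ∨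
       (¬ X.hasTru ∧ X.hasFls ∧ Y.hasTru ∧ ¬ Y.hasFls)) := by
  obtain ⟨a, t, ht, hp | hp⟩ := ell_shape h <;> subst hp
  · obtain ⟨h1, h2, d, h3⟩ := feT_facts ht
    exact ⟨a, _, _, d, fe_ell_pos a t, h3, h3.bar,
      Or.inl ⟨h1, h2, not_hasTru_bar _, hasFls_bar _⟩⟩
  · obtain ⟨h1, h2, d, h3⟩ := feT_facts ht
    exact ⟨a, _, _, d, fe_ell_neg a t, h3.bar, h3,
      Or.inr ⟨not_hasTru_bar _, hasFls_bar _, h1, h2⟩⟩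

lemma star_facts {p : FTerm A} (h : IsFT_Star p) :
    (fe p).hasTru ∧ (fe p).hasFls ∧ ∃ k, 1 ≤ k ∧ Perfect (fe p) k := by
  induction p with
  | atom a =>
    rcases star_shape h with hl | ⟨r, s, hp, _⟩ | ⟨r, s, hp, _⟩
    · rcases ell_shape hl with ⟨_, _, _, hp | hp⟩ <;> cases hp
    · cases hp
    · cases hp
  | tru =>
    rcases star_shape h with hl | ⟨r, s, hp, _⟩ | ⟨r, s, hp, _⟩
    · rcases ell_shape hl with ⟨_, _, _, hp | hp⟩ <;> cases hp
    · cases hp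
    · cases hp
  | fls =>
    rcases star_shape h with hl | ⟨r, s, hp, _⟩ | ⟨r, s, hp, _⟩
    · rcases ell_shape hl with ⟨_, _, _, hp | hp⟩ <;> cases hp
    · cases hp
    · cases hp
  | neg q ih =>
    rcases star_shape h with hl | ⟨r, s, hp, _⟩ | ⟨r, s, hp, _⟩
    · rcases ell_shape hl with ⟨_, _, _, hp | hp⟩ <;> cases hp
    · cases hp
    · cases hp
  | and r s ihr ihs =>
    rcases star_shape h with hl | ⟨r', s', hp, hr, hs⟩ | ⟨r', s', hp, _⟩
    · obtain ⟨a, X, Y, m, hfe, hX, hY, hcase⟩ := ell_fe hl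
      refine ⟨?_, ?_, m + 1, by omega, by rw [hfe]; exact Perfect.node a hX hY⟩ <;>
        rw [hfe] <;> rcases hcase with ⟨c1, c2, c3, c4⟩ | ⟨c1, c2, c3, c4⟩ <;> simp_all
    · cases hp
      obtain ⟨hTr, hFr, k, hk1, hkp⟩ := ihr hr
      obtain ⟨hTs, hFs, m, hm1, hmp⟩ := ihs (IsFT_Star.d hs)
      rw [fe_and]
      exact ⟨hasTru_subst_left hTr hTs _, hasFls_subst_both hFs (hasFls_bar _) _,
        k + m, by omega, hkp.subst hmp hmp.bar⟩
    · cases hp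
  | or r s ihr ihs =>
    rcases star_shape h with hl | ⟨r', s', hp, _⟩ | ⟨r', s', hp, hr, hs⟩
    · rcases ell_shape hl with ⟨_, _, _, hp | hp⟩ <;> cases hp
    · cases hp
    · cases hp
      obtain ⟨hTr, hFr, k, hk1, hkp⟩ := ihr hr
      obtain ⟨hTs, hFs, m, hm1, hmp⟩ := ihs (IsFT_Star.c hs)
      rw [fe_or]
      exact ⟨hasTru_subst_both (hasTru_star _) hTs _, hasFls_subst_right hFr hFs _,
        k + m, by omega, hkp.subst hmp.star hmp⟩

end FEInj
namespace FEInj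

variable {A : Type}

/-- A star tree has no uniform level: its depth-`d` subtrees are not all equal
    (for `1 ≤ d ≤` the depth). -/
lemma no_uniform {p : FTerm A} (hp : IsFT_Star p) :
    ∀ {n d : ℕ} {W : ETree A}, Perfect (fe p) n → 1 ≤ d → d ≤ n →
      (∀ π : List Bool, π.length = d → subAt π (fe p) = W) → False := by
  induction p with
  | atom a => rcases star_shape hp with hl | ⟨r', s', h, _⟩ | ⟨r', s', h, _⟩
              · rcases ell_shape hl with ⟨_, _, _, h | h⟩ <;> cases h
              · cases h
              · cases h
  | tru => rcases star_shape hp with hl | ⟨r', s', h, _⟩ | ⟨r', s', h, _⟩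
           · rcases ell_shape hl with ⟨_, _, _, h | h⟩ <;> cases h
           · cases h
           · cases h
  | fls => rcases star_shape hp with hl | ⟨r', s', h, _⟩ | ⟨r', s', h, _⟩
           · rcases ell_shape hl with ⟨_, _, _, h | h⟩ <;> cases h
           · cases h
           · cases h
  | neg q _ => rcases star_shape hp with hl | ⟨r', s', h, _⟩ | ⟨r', s', h, _⟩
               · rcases ell_shape hl with ⟨_, _, _, h | h⟩ <;> cases h
               · cases h
               · cases h
  | and r s ihr ihs =>
    intro n d W hn hd1 hdn hall
    rcases star_shape hp with hl | ⟨r', s', hps, hr, hs⟩ | ⟨r', s', hps, _⟩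
    · -- ℓ-term
      obtain ⟨a, X, Y, m, hfe, hX, hY, hcase⟩ := ell_fe hl
      have hn' : Perfect (fe (FTerm.and r s)) (m + 1) := by
        rw [hfe]; exact Perfect.node a hX hY
      have hnm : n = m + 1 := (hn.unique hn').symm ▸ rfl
      have hdm : d - 1 ≤ m := by
        have := hn.unique hn'; omega
      -- one child has T, the other doesn't
      obtain ⟨c1, _, c3, _⟩ | ⟨c1, _, c3, _⟩ := hcase
      · obtain ⟨τ, hτl, hτT⟩ := exists_hasTru_sub hX c1 hdm
        have e1 : subAt (true :: τ) (fe (FTerm.and r s)) = W :=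
          hall _ (by simp [hτl]; omega)
        have e2 : subAt (false :: τ) (fe (FTerm.and r s)) = W :=
          hall _ (by simp [hτl]; omega)
        rw [hfe] at e1 e2
        simp at e1 e2
        rw [e1] at hτT
        rw [← e2] at hτT
        exact not_hasTru_subAt c3 τ hτT
      · obtain ⟨τ, hτl, hτT⟩ := exists_hasTru_sub hY c3 hdm
        have e1 : subAt (false :: τ) (fe (FTerm.and r s)) = W :=
          hall _ (by simp [hτl]; omega)
        have e2 : subAt (true :: τ) (fe (FTerm.and r s)) = W :=
          hall _ (by simp [hτl]; omega)
        rw [hfe] at e1 e2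
        simp at e1 e2
        rw [e1] at hτT
        rw [← e2] at hτT
        exact not_hasTru_subAt c1 τ hτT
    · -- conjunction of star terms
      cases hps
      obtain ⟨hTr, hFr, k, hk1, hkp⟩ := star_facts hr
      obtain ⟨hTs, hFs, m, hm1, hmp⟩ := star_facts (IsFT_Star.d hs)
      set Z := fe s with hZ
      set Zb := Z.subst .fls .fls with hZb
      have hfe : fe (FTerm.and r s) = (fe r).subst Z Zb := fe_and r s
      have hn' : Perfect (fe (FTerm.and r s)) (k + m) := by
        rw [hfe]; exact hkp.subst hmp hmp.bar
      have hnkm : n = k + m := hn.unique hn'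
      have hZbT : ¬ Zb.hasTru := not_hasTru_bar Z
      have hneq : Z ≠ Zb := fun e => hZbT (e ▸ hTs)
      by_cases hdk : d ≤ k
      · -- use the induction hypothesis on r
        set W0 := subAt (List.replicate d true) (fe r) with hW0
        refine ihr hr hkp hd1 hdk (W := W0) ?_
        intro π hπ
        have h1 : (subAt π (fe r)).subst Z Zb = W := by
          rw [← subAt_subst hkp (by omega) Z Zb, ← hfe]; exact hall π hπ
        have h2 : (subAt (List.replicate d true) (fe r)).subst Z Zb = W := by
          rw [← subAt_subst hkp (by simp; omega) Z Zb, ← hfe]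
          exact hall _ (by simp)
        have P1 : Perfect (subAt π (fe r)) (k - d) := by
          have := hkp.subAt (p := π) (by omega)
          rwa [hπ] at this
        have P2 : Perfect (subAt (List.replicate d true) (fe r)) (k - d) := by
          have := hkp.subAt (p := List.replicate d true) (by simp; omega)
          simpa using this
        exact (subst_cancel P1 P2 hneq (Ne.symm hneq) (h1.trans h2.symm)).1
      · -- d > k : compare a T-path and an F-path of `fe r`
        push_neg at hdk
        obtain ⟨πT, hπTl, hπT⟩ := exists_tru_path hkp hTr
        obtain ⟨πF, hπFl, hπF⟩ := exists_fls_path hkp hFr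
        obtain ⟨τ, hτl, hτT⟩ := exists_hasTru_sub hmp hTs (by omega : d - k ≤ m)
        have e1 : subAt (πT ++ τ) (fe (FTerm.and r s)) = W := by
          refine hall _ (by simp [hπTl, hτl]; omega)
        have e2 : subAt (πF ++ τ) (fe (FTerm.and r s)) = W := by
          refine hall _ (by simp [hπFl, hτl]; omega)
        rw [hfe, subAt_append, subAt_subst hkp (le_of_eq hπTl), hπT] at e1
        rw [hfe, subAt_append, subAt_subst hkp (le_of_eq hπFl), hπF] at e2
        simp only [subst_tru, subst_fls] at e1 e2
        rw [e1] at hτT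
        rw [← e2] at hτT
        exact not_hasTru_subAt (not_hasTru_bar Z) τ hτT
    · cases hps
  | or r s ihr ihs =>
    intro n d W hn hd1 hdn hall
    rcases star_shape hp with hl | ⟨r', s', hps, _⟩ | ⟨r', s', hps, hr, hs⟩
    · rcases ell_shape hl with ⟨_, _, _, h | h⟩ <;> cases h
    · cases hps
    · cases hps
      obtain ⟨hTr, hFr, k, hk1, hkp⟩ := star_facts hr
      obtain ⟨hTs, hFs, m, hm1, hmp⟩ := star_facts (IsFT_Star.c hs)
      set Z := fe s with hZ
      set Zs := Z.subst .tru .tru with hZs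
      have hfe : fe (FTerm.or r s) = (fe r).subst Zs Z := fe_or r s
      have hn' : Perfect (fe (FTerm.or r s)) (k + m) := by
        rw [hfe]; exact hkp.subst hmp.star hmp
      have hnkm : n = k + m := hn.unique hn'
      have hZsF : ¬ Zs.hasFls := not_hasFls_star Z
      have hneq : Zs ≠ Z := fun e => hZsF (e.symm ▸ hFs)
      by_cases hdk : d ≤ k
      · set W0 := subAt (List.replicate d true) (fe r) with hW0
        refine ihr hr hkp hd1 hdk (W := W0) ?_
        intro π hπ
        have h1 : (subAt π (fe r)).subst Zs Z = W := by
          rw [← subAt_subst hkp (by omega) Zs Z, ← hfe]; exact hall π hπ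
        have h2 : (subAt (List.replicate d true) (fe r)).subst Zs Z = W := by
          rw [← subAt_subst hkp (by simp; omega) Zs Z, ← hfe]
          exact hall _ (by simp)
        have P1 : Perfect (subAt π (fe r)) (k - d) := by
          have := hkp.subAt (p := π) (by omega)
          rwa [hπ] at this
        have P2 : Perfect (subAt (List.replicate d true) (fe r)) (k - d) := by
          have := hkp.subAt (p := List.replicate d true) (by simp; omega)
          simpa using this
        exact (subst_cancel P1 P2 hneq (Ne.symm hneq) (h1.trans h2.symm)).1
      · push_neg at hdk
        obtain ⟨πT, hπTl, hπT⟩ := exists_tru_path hkp hTr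
        obtain ⟨πF, hπFl, hπF⟩ := exists_fls_path hkp hFr
        obtain ⟨τ, hτl, hτF⟩ := exists_hasFls_sub hmp hFs (by omega : d - k ≤ m)
        have e1 : subAt (πF ++ τ) (fe (FTerm.or r s)) = W := by
          refine hall _ (by simp [hπFl, hτl]; omega)
        have e2 : subAt (πT ++ τ) (fe (FTerm.or r s)) = W := by
          refine hall _ (by simp [hπTl, hτl]; omega)
        rw [hfe, subAt_append, subAt_subst hkp (le_of_eq hπFl), hπF] at e1
        rw [hfe, subAt_append, subAt_subst hkp (le_of_eq hπTl), hπT] at e2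
        simp only [subst_tru, subst_fls] at e1 e2
        rw [e1] at hτF
        rw [← e2] at hτF
        exact not_hasFls_subAt (not_hasFls_star Z) τ hτF

end FEInj
namespace FEInj

variable {A : Type}

lemma perfect_node_of_pos {x : ETree A} {k : ℕ} (h : Perfect x k) (hk : 1 ≤ k) :
    ∃ l a r, x = ETree.node l a r ∧ Perfect l (k - 1) ∧ Perfect r (k - 1) := by
  cases h with
  | tru => omega
  | fls => omega
  | node a hl hr => exact ⟨_, _, _, rfl, by simpa using hl, by simpa using hr⟩

/-- An ℓ-tree is never the tree of a full conjunction of star terms. -/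
lemma ell_ne_and {p r s : FTerm A} (hl : IsFT_L p) (hr : IsFT_Star r)
    (hs : IsFT_Star s) : fe p ≠ fe (.and r s) := by
  intro h
  obtain ⟨a, X, Y, m, hfe, hX, hY, hcase⟩ := ell_fe hl
  obtain ⟨hTr, hFr, k, hk1, hkp⟩ := star_facts hr
  obtain ⟨hTs, hFs, _, _, _⟩ := star_facts hs
  obtain ⟨L, b, R, hnode, _, _⟩ := perfect_node_of_pos hkp hk1
  rw [hfe, fe_and, hnode] at h
  simp only [subst_node, ETree.node.injEq] at h
  obtain ⟨h1, -, h2⟩ := h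
  have hLf : (L.subst (fe s) ((fe s).subst .fls .fls)).hasFls :=
    hasFls_subst_both hFs (hasFls_bar _) L
  have hRf : (R.subst (fe s) ((fe s).subst .fls .fls)).hasFls :=
    hasFls_subst_both hFs (hasFls_bar _) R
  rcases hcase with ⟨-, c2, -, -⟩ | ⟨-, -, -, c4⟩
  · exact c2 (h1 ▸ hLf)
  · exact c4 (h2 ▸ hRf)

/-- An ℓ-tree is never the tree of a full disjunction of star terms. -/
lemma ell_ne_or {p r s : FTerm A} (hl : IsFT_L p) (hr : IsFT_Star r)
    (hs : IsFT_Star s) : fe p ≠ fe (.or r s) := by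
  intro h
  obtain ⟨a, X, Y, m, hfe, hX, hY, hcase⟩ := ell_fe hl
  obtain ⟨hTr, hFr, k, hk1, hkp⟩ := star_facts hr
  obtain ⟨hTs, hFs, _, _, _⟩ := star_facts hs
  obtain ⟨L, b, R, hnode, _, _⟩ := perfect_node_of_pos hkp hk1
  rw [hfe, fe_or, hnode] at h
  simp only [subst_node, ETree.node.injEq] at h
  obtain ⟨h1, -, h2⟩ := h
  have hLt : (L.subst ((fe s).subst .tru .tru) (fe s)).hasTru :=
    hasTru_subst_both (hasTru_star _) hTs L
  have hRt : (R.subst ((fe s).subst .tru .tru) (fe s)).hasTru :=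
    hasTru_subst_both (hasTru_star _) hTs R
  rcases hcase with ⟨-, -, c3, -⟩ | ⟨c1, -, -, -⟩
  · exact c3 (h2 ▸ hRt)
  · exact c1 (h1 ▸ hLt)

/-- Full conjunctions and disjunctions of star terms have distinct trees. -/
lemma and_ne_or {r1 s1 r2 s2 : FTerm A} (hr1 : IsFT_Star r1) (hs1 : IsFT_Star s1)
    (hr2 : IsFT_Star r2) (hs2 : IsFT_Star s2) :
    fe (.and r1 s1) ≠ fe (.or r2 s2) := by
  intro h
  obtain ⟨hT1, hF1, k1, hk11, hk1p⟩ := star_facts hr1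
  obtain ⟨hT2, hF2, k2, hk21, hk2p⟩ := star_facts hr2
  obtain ⟨hTs1, hFs1, m1, hm11, hm1p⟩ := star_facts hs1
  obtain ⟨hTs2, hFs2, m2, hm21, hm2p⟩ := star_facts hs2
  rw [fe_and, fe_or] at h
  rcases le_or_gt k1 k2 with hle | hlt
  · obtain ⟨πF, hπFl, hπF⟩ := exists_fls_path hk1p hF1
    have e1 : subAt πF ((fe r1).subst (fe s1) ((fe s1).subst .fls .fls)) =
        (fe s1).subst .fls .fls := by
      rw [subAt_subst hk1p (le_of_eq hπFl), hπF, subst_fls]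
    have e2 : subAt πF ((fe r2).subst ((fe s2).subst .tru .tru) (fe s2)) =
        (subAt πF (fe r2)).subst ((fe s2).subst .tru .tru) (fe s2) :=
      subAt_subst hk2p (by omega) _ _
    rw [h, e2] at e1
    have : ((subAt πF (fe r2)).subst ((fe s2).subst .tru .tru) (fe s2)).hasTru :=
      hasTru_subst_both (hasTru_star _) hTs2 _
    rw [e1] at this
    exact not_hasTru_bar _ this
  · obtain ⟨πT, hπTl, hπT⟩ := exists_tru_path hk2p hT2
    have e1 : subAt πT ((fe r2).subst ((fe s2).subst .tru .tru) (fe s2)) =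
        (fe s2).subst .tru .tru := by
      rw [subAt_subst hk2p (le_of_eq hπTl), hπT, subst_tru]
    have e2 : subAt πT ((fe r1).subst (fe s1) ((fe s1).subst .fls .fls)) =
        (subAt πT (fe r1)).subst (fe s1) ((fe s1).subst .fls .fls) :=
      subAt_subst hk1p (by omega) _ _
    rw [← h, e2] at e1
    have : ((subAt πT (fe r1)).subst (fe s1) ((fe s1).subst .fls .fls)).hasFls :=
      hasFls_subst_both hFs1 (hasFls_bar _) _
    rw [e1] at this
    exact not_hasFls_star _ this

/-- Two full conjunctions of star terms with equal trees have left arguments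
    of equal uniform depth. -/
lemma and_and_lt {r1 s1 r2 s2 : FTerm A} {k1 k2 : ℕ}
    (hr1 : IsFT_Star r1) (hs1 : IsFT_D s1) (hr2 : IsFT_Star r2) (hs2 : IsFT_Star s2)
    (hk1p : Perfect (fe r1) k1) (hk2p : Perfect (fe r2) k2) (hlt : k1 < k2)
    (h : fe (.and r1 s1) = fe (.and r2 s2)) : False := by
  obtain ⟨hT1, hF1, k1', hk11', hk1p'⟩ := star_facts hr1
  obtain ⟨hT2, hF2, k2', hk21', hk2p'⟩ := star_facts hr2
  have hk11 : 1 ≤ k1 := by have := hk1p'.unique hk1p; omega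
  have hk21 : 1 ≤ k2 := by have := hk2p'.unique hk2p; omega
  clear hk1p' hk2p' hk11' hk21'
  obtain ⟨hTs1, hFs1, m1, hm11, hm1p⟩ := star_facts (IsFT_Star.d hs1)
  obtain ⟨hTs2, hFs2, m2, hm21, hm2p⟩ := star_facts hs2
  rw [fe_and, fe_and] at h
  obtain ⟨πT, hπTl, hπT⟩ := exists_tru_path hk1p hT1
  set S := subAt πT (fe r2) with hS
  have hSp : Perfect S (k2 - k1) := by
    have := hk2p.subAt (p := πT) (by omega)
    rwa [hπTl] at this
  have hZ1 : fe s1 = S.subst (fe s2) ((fe s2).subst .fls .fls) := by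
    have e1 : subAt πT ((fe r1).subst (fe s1) ((fe s1).subst .fls .fls)) = fe s1 := by
      rw [subAt_subst hk1p (le_of_eq hπTl), hπT, subst_tru]
    have e2 : subAt πT ((fe r2).subst (fe s2) ((fe s2).subst .fls .fls)) =
        S.subst (fe s2) ((fe s2).subst .fls .fls) :=
      subAt_subst hk2p (by omega) _ _
    rw [← e1, h, e2]
  by_cases hSF : S.hasFls
  · rcases d_shape hs1 with hl | ⟨u, v, hsv, hu, hv⟩
    · -- s1 an ℓ-term : both children of the grafting have an F-leaf
      obtain ⟨a, X, Y, m, hfe, hX, hY, hcase⟩ := ell_fe hl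
      obtain ⟨L, b, R, hnode, _, _⟩ := perfect_node_of_pos hSp (by omega)
      rw [hfe, hnode] at hZ1
      simp only [subst_node, ETree.node.injEq] at hZ1
      obtain ⟨h1, -, h2⟩ := hZ1
      have hLf : (L.subst (fe s2) ((fe s2).subst .fls .fls)).hasFls :=
        hasFls_subst_both hFs2 (hasFls_bar _) L
      have hRf : (R.subst (fe s2) ((fe s2).subst .fls .fls)).hasFls :=
        hasFls_subst_both hFs2 (hasFls_bar _) R
      rcases hcase with ⟨-, c2, -, -⟩ | ⟨-, -, -, c4⟩
      · exact c2 (h1 ▸ hLf)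
      · exact c4 (h2 ▸ hRf)
    · -- s1 = u ∨• v
      subst hsv
      obtain ⟨hTu, hFu, mu, hmu1, hmup⟩ := star_facts hu
      obtain ⟨hTv, hFv, mv, hmv1, hmvp⟩ := star_facts (IsFT_Star.c hv)
      rw [fe_or] at hZ1
      rcases le_or_gt mu (k2 - k1) with hle | hlt'
      · obtain ⟨τ, hτl, hτ⟩ := exists_tru_path hmup hTu
        have e1 : subAt τ ((fe u).subst ((fe v).subst .tru .tru) (fe v)) =
            (fe v).subst .tru .tru := by
          rw [subAt_subst hmup (le_of_eq hτl), hτ, subst_tru]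
        have e2 : subAt τ (S.subst (fe s2) ((fe s2).subst .fls .fls)) =
            (subAt τ S).subst (fe s2) ((fe s2).subst .fls .fls) :=
          subAt_subst hSp (by omega) _ _
        rw [hZ1, e2] at e1
        have : ((subAt τ S).subst (fe s2) ((fe s2).subst .fls .fls)).hasFls :=
          hasFls_subst_both hFs2 (hasFls_bar _) _
        rw [e1] at this
        exact not_hasFls_star _ this
      · obtain ⟨τ, hτl, hτ⟩ := exists_fls_path hSp hSF
        have e1 : subAt τ (S.subst (fe s2) ((fe s2).subst .fls .fls)) =
            (fe s2).subst .fls .fls := by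
          rw [subAt_subst hSp (le_of_eq hτl), hτ, subst_fls]
        have e2 : subAt τ ((fe u).subst ((fe v).subst .tru .tru) (fe v)) =
            (subAt τ (fe u)).subst ((fe v).subst .tru .tru) (fe v) :=
          subAt_subst hmup (by omega) _ _
        rw [← hZ1, e2] at e1
        have : ((subAt τ (fe u)).subst ((fe v).subst .tru .tru) (fe v)).hasTru :=
          hasTru_subst_both (hasTru_star _) hTv _
        rw [e1] at this
        exact not_hasTru_bar _ this
  · -- S has only T-leaves : fe s1 has a uniform level
    have hall : ∀ π : List Bool, π.length = k2 - k1 → subAt π (fe s1) = fe s2 := by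
      intro π hπ
      rw [hZ1, subAt_subst hSp (by omega)]
      rcases subAt_full hSp hπ with he | he
      · rw [he, subst_tru]
      · exact absurd (hasFls_of_subAt_fls he) hSF
    have hperf : Perfect (fe s1) ((k2 - k1) + m2) := by
      rw [hZ1]; exact hSp.subst hm2p hm2p.bar
    exact no_uniform (IsFT_Star.d hs1) hperf (by omega) (by omega) hall

/-- Mirror image of `and_and_lt` for disjunctions. -/
lemma or_or_lt {r1 s1 r2 s2 : FTerm A} {k1 k2 : ℕ}
    (hr1 : IsFT_Star r1) (hs1 : IsFT_C s1) (hr2 : IsFT_Star r2) (hs2 : IsFT_Star s2)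
    (hk1p : Perfect (fe r1) k1) (hk2p : Perfect (fe r2) k2) (hlt : k1 < k2)
    (h : fe (.or r1 s1) = fe (.or r2 s2)) : False := by
  obtain ⟨hT1, hF1, k1', hk11', hk1p'⟩ := star_facts hr1
  obtain ⟨hT2, hF2, k2', hk21', hk2p'⟩ := star_facts hr2
  have hk11 : 1 ≤ k1 := by have := hk1p'.unique hk1p; omega
  have hk21 : 1 ≤ k2 := by have := hk2p'.unique hk2p; omega
  clear hk1p' hk2p' hk11' hk21'
  obtain ⟨hTs1, hFs1, m1, hm11, hm1p⟩ := star_facts (IsFT_Star.c hs1)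
  obtain ⟨hTs2, hFs2, m2, hm21, hm2p⟩ := star_facts hs2
  rw [fe_or, fe_or] at h
  obtain ⟨πF, hπFl, hπF⟩ := exists_fls_path hk1p hF1
  set S := subAt πF (fe r2) with hS
  have hSp : Perfect S (k2 - k1) := by
    have := hk2p.subAt (p := πF) (by omega)
    rwa [hπFl] at this
  have hZ1 : fe s1 = S.subst ((fe s2).subst .tru .tru) (fe s2) := by
    have e1 : subAt πF ((fe r1).subst ((fe s1).subst .tru .tru) (fe s1)) = fe s1 := by
      rw [subAt_subst hk1p (le_of_eq hπFl), hπF, subst_fls]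
    have e2 : subAt πF ((fe r2).subst ((fe s2).subst .tru .tru) (fe s2)) =
        S.subst ((fe s2).subst .tru .tru) (fe s2) :=
      subAt_subst hk2p (by omega) _ _
    rw [← e1, h, e2]
  by_cases hST : S.hasTru
  · rcases c_shape hs1 with hl | ⟨u, v, hsv, hu, hv⟩
    · obtain ⟨a, X, Y, m, hfe, hX, hY, hcase⟩ := ell_fe hl
      obtain ⟨L, b, R, hnode, _, _⟩ := perfect_node_of_pos hSp (by omega)
      rw [hfe, hnode] at hZ1
      simp only [subst_node, ETree.node.injEq] at hZ1
      obtain ⟨h1, -, h2⟩ := hZ1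
      have hLt : (L.subst ((fe s2).subst .tru .tru) (fe s2)).hasTru :=
        hasTru_subst_both (hasTru_star _) hTs2 L
      have hRt : (R.subst ((fe s2).subst .tru .tru) (fe s2)).hasTru :=
        hasTru_subst_both (hasTru_star _) hTs2 R
      rcases hcase with ⟨-, -, c3, -⟩ | ⟨c1, -, -, -⟩
      · exact c3 (h2 ▸ hRt)
      · exact c1 (h1 ▸ hLt)
    · -- s1 = u ∧• v
      subst hsv
      obtain ⟨hTu, hFu, mu, hmu1, hmup⟩ := star_facts hu
      obtain ⟨hTv, hFv, mv, hmv1, hmvp⟩ := star_facts (IsFT_Star.d hv)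
      rw [fe_and] at hZ1
      rcases le_or_gt mu (k2 - k1) with hle | hlt'
      · obtain ⟨τ, hτl, hτ⟩ := exists_fls_path hmup hFu
        have e1 : subAt τ ((fe u).subst (fe v) ((fe v).subst .fls .fls)) =
            (fe v).subst .fls .fls := by
          rw [subAt_subst hmup (le_of_eq hτl), hτ, subst_fls]
        have e2 : subAt τ (S.subst ((fe s2).subst .tru .tru) (fe s2)) =
            (subAt τ S).subst ((fe s2).subst .tru .tru) (fe s2) :=
          subAt_subst hSp (by omega) _ _
        rw [hZ1, e2] at e1
        have : ((subAt τ S).subst ((fe s2).subst .tru .tru) (fe s2)).hasTru :=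
          hasTru_subst_both (hasTru_star _) hTs2 _
        rw [e1] at this
        exact not_hasTru_bar _ this
      · obtain ⟨τ, hτl, hτ⟩ := exists_tru_path hSp hST
        have e1 : subAt τ (S.subst ((fe s2).subst .tru .tru) (fe s2)) =
            (fe s2).subst .tru .tru := by
          rw [subAt_subst hSp (le_of_eq hτl), hτ, subst_tru]
        have e2 : subAt τ ((fe u).subst (fe v) ((fe v).subst .fls .fls)) =
            (subAt τ (fe u)).subst (fe v) ((fe v).subst .fls .fls) :=
          subAt_subst hmup (by omega) _ _
        rw [← hZ1, e2] at e1
        have : ((subAt τ (fe u)).subst (fe v) ((fe v).subst .fls .fls)).hasFls :=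
          hasFls_subst_both hFv (hasFls_bar _) _
        rw [e1] at this
        exact not_hasFls_star _ this
  · have hall : ∀ π : List Bool, π.length = k2 - k1 → subAt π (fe s1) = fe s2 := by
      intro π hπ
      rw [hZ1, subAt_subst hSp (by omega)]
      rcases subAt_full hSp hπ with he | he
      · exact absurd (hasTru_of_subAt_tru he) hST
      · rw [he, subst_fls]
    have hperf : Perfect (fe s1) ((k2 - k1) + m2) := by
      rw [hZ1]; exact hSp.subst hm2p.star hm2p
    exact no_uniform (IsFT_Star.c hs1) hperf (by omega) (by omega) hall

end FEInj
namespace FEInj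

variable {A : Type}

/-- `fe` is injective on T-terms. -/
lemma feT_inj {t1 t2 : FTerm A} (h1 : IsFT_T t1) (h2 : IsFT_T t2)
    (h : fe t1 = fe t2) : t1 = t2 := by
  induction h1 generalizing t2 with
  | tru =>
    cases h2 with
    | tru => rfl
    | or a ht => rw [fe_or_atom] at h; cases h
  | or a ht ih =>
    cases h2 with
    | tru => rw [fe_or_atom] at h; cases h
    | or a' ht' =>
      rw [fe_or_atom, fe_or_atom] at h
      simp only [ETree.node.injEq] at h
      rw [h.2.1, ih ht' h.2.2]

/-- `fe` is injective on F-terms. -/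
lemma feF_inj {t1 t2 : FTerm A} (h1 : IsFT_F t1) (h2 : IsFT_F t2)
    (h : fe t1 = fe t2) : t1 = t2 := by
  induction h1 generalizing t2 with
  | fls =>
    cases h2 with
    | fls => rfl
    | and a ht => rw [fe_ell_pos] at h; cases h
  | and a ht ih =>
    cases h2 with
    | fls => rw [fe_ell_pos] at h; cases h
    | and a' ht' =>
      rw [fe_ell_pos, fe_ell_pos] at h
      simp only [ETree.node.injEq] at h
      rw [h.2.1, ih ht' h.1]

/-- `fe` is injective on ℓ-terms. -/
lemma ell_inj {p q : FTerm A} (h1 : IsFT_L p) (h2 : IsFT_L q)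
    (h : fe p = fe q) : p = q := by
  obtain ⟨a1, t1, ht1, hp1 | hp1⟩ := ell_shape h1 <;>
    obtain ⟨a2, t2, ht2, hp2 | hp2⟩ := ell_shape h2 <;> subst hp1 hp2
  · rw [fe_ell_pos, fe_ell_pos] at h
    simp only [ETree.node.injEq] at h
    rw [h.2.1, feT_inj ht1 ht2 h.1]
  · rw [fe_ell_pos, fe_ell_neg] at h
    simp only [ETree.node.injEq] at h
    exact absurd (h.1 ▸ (feT_facts ht1).1) (not_hasTru_bar _)
  · rw [fe_ell_neg, fe_ell_pos] at h
    simp only [ETree.node.injEq] at h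
    exact absurd (h.1.symm ▸ (feT_facts ht2).1) (not_hasTru_bar _)
  · rw [fe_ell_neg, fe_ell_neg] at h
    simp only [ETree.node.injEq] at h
    rw [h.2.1, feT_inj ht1 ht2 h.2.2]

/-- `fe` is injective on star terms. -/
lemma star_inj : ∀ (n : ℕ) (p q : FTerm A), sizeOf p + sizeOf q ≤ n →
    IsFT_Star p → IsFT_Star q → fe p = fe q → p = q := by
  intro n
  induction n using Nat.strong_induction_on with
  | _ n IH =>
    intro p q hsz hp hq h
    rcases star_shape hp with hl1 | ⟨r1, s1, hp1, hr1, hs1⟩ | ⟨r1, s1, hp1, hr1, hs1⟩ <;>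
      rcases star_shape hq with hl2 | ⟨r2, s2, hp2, hr2, hs2⟩ | ⟨r2, s2, hp2, hr2, hs2⟩
    · exact ell_inj hl1 hl2 h
    · subst hp2; exact absurd h (ell_ne_and hl1 hr2 (IsFT_Star.d hs2))
    · subst hp2; exact absurd h (ell_ne_or hl1 hr2 (IsFT_Star.c hs2))
    · subst hp1; exact absurd h.symm (ell_ne_and hl2 hr1 (IsFT_Star.d hs1))
    · -- and vs and
      subst hp1 hp2
      obtain ⟨hT1, hF1, k1, hk11, hk1p⟩ := star_facts hr1
      obtain ⟨hT2, hF2, k2, hk21, hk2p⟩ := star_facts hr2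
      obtain ⟨hTs1, hFs1, m1, hm11, hm1p⟩ := star_facts (IsFT_Star.d hs1)
      obtain ⟨hTs2, hFs2, m2, hm21, hm2p⟩ := star_facts (IsFT_Star.d hs2)
      rcases lt_trichotomy k1 k2 with hlt | heq | hgt
      · exact absurd h (fun h => and_and_lt hr1 hs1 hr2 (IsFT_Star.d hs2) hk1p hk2p hlt h)
      · subst heq
        rw [fe_and, fe_and] at h
        have hne1 : fe s1 ≠ (fe s2).subst .fls .fls :=
          fun e => not_hasTru_bar (fe s2) (e ▸ hTs1)
        have hne2 : (fe s1).subst .fls .fls ≠ fe s2 :=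
          fun e => not_hasTru_bar (fe s1) (e.symm ▸ hTs2)
        obtain ⟨er, ht, -⟩ := subst_cancel hk1p hk2p hne1 hne2 h
        have hz : fe s1 = fe s2 := ht hT1
        have e1 : r1 = r2 := by
          refine IH (sizeOf r1 + sizeOf r2) ?_ r1 r2 le_rfl hr1 hr2 er
          simp only [FTerm.and.sizeOf_spec] at hsz; omega
        have e2 : s1 = s2 := by
          refine IH (sizeOf s1 + sizeOf s2) ?_ s1 s2 le_rfl
            (IsFT_Star.d hs1) (IsFT_Star.d hs2) hz
          simp only [FTerm.and.sizeOf_spec] at hsz; omega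
        rw [e1, e2]
      · exact absurd h.symm
          (fun h => and_and_lt hr2 hs2 hr1 (IsFT_Star.d hs1) hk2p hk1p hgt h)
    · subst hp1 hp2
      exact absurd h (and_ne_or hr1 (IsFT_Star.d hs1) hr2 (IsFT_Star.c hs2))
    · subst hp1; exact absurd h.symm (ell_ne_or hl2 hr1 (IsFT_Star.c hs1))
    · subst hp1 hp2
      exact absurd h.symm (and_ne_or hr2 (IsFT_Star.d hs2) hr1 (IsFT_Star.c hs1))
    · -- or vs or
      subst hp1 hp2
      obtain ⟨hT1, hF1, k1, hk11, hk1p⟩ := star_facts hr1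
      obtain ⟨hT2, hF2, k2, hk21, hk2p⟩ := star_facts hr2
      obtain ⟨hTs1, hFs1, m1, hm11, hm1p⟩ := star_facts (IsFT_Star.c hs1)
      obtain ⟨hTs2, hFs2, m2, hm21, hm2p⟩ := star_facts (IsFT_Star.c hs2)
      rcases lt_trichotomy k1 k2 with hlt | heq | hgt
      · exact absurd h (fun h => or_or_lt hr1 hs1 hr2 (IsFT_Star.c hs2) hk1p hk2p hlt h)
      · subst heq
        rw [fe_or, fe_or] at h
        have hne1 : (fe s1).subst .tru .tru ≠ fe s2 :=
          fun e => not_hasFls_star (fe s1) (e.symm ▸ hFs2)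
        have hne2 : fe s1 ≠ (fe s2).subst .tru .tru :=
          fun e => not_hasFls_star (fe s2) (e ▸ hFs1)
        obtain ⟨er, -, hf⟩ := subst_cancel hk1p hk2p hne1 hne2 h
        have hz : fe s1 = fe s2 := hf hF1
        have e1 : r1 = r2 := by
          refine IH (sizeOf r1 + sizeOf r2) ?_ r1 r2 le_rfl hr1 hr2 er
          simp only [FTerm.or.sizeOf_spec] at hsz; omega
        have e2 : s1 = s2 := by
          refine IH (sizeOf s1 + sizeOf s2) ?_ s1 s2 le_rfl
            (IsFT_Star.c hs1) (IsFT_Star.c hs2) hz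
          simp only [FTerm.or.sizeOf_spec] at hsz; omega
        rw [e1, e2]
      · exact absurd h.symm
          (fun h => or_or_lt hr2 hs2 hr1 (IsFT_Star.c hs1) hk2p hk1p hgt h)

lemma star_inj' {p q : FTerm A} (hp : IsFT_Star p) (hq : IsFT_Star q)
    (h : fe p = fe q) : p = q :=
  star_inj (sizeOf p + sizeOf q) p q le_rfl hp hq h

/-- Depth comparison at top level for `P^T ∧• P^*` forms. -/
lemma ts_lt {t1 s1 t2 s2 : FTerm A} {d1 d2 : ℕ}
    (ht1 : IsFT_T t1) (hs1 : IsFT_Star s1) (ht2 : IsFT_T t2) (hs2 : IsFT_Star s2)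
    (hd1 : Perfect (fe t1) d1) (hd2 : Perfect (fe t2) d2) (hlt : d1 < d2)
    (h : fe (.and t1 s1) = fe (.and t2 s2)) : False := by
  obtain ⟨hTt1, hFt1, -⟩ := feT_facts ht1
  obtain ⟨hTt2, hFt2, -⟩ := feT_facts ht2
  obtain ⟨hTs2, hFs2, m2, hm21, hm2p⟩ := star_facts hs2
  rw [fe_and, fe_and] at h
  obtain ⟨π, hπl, hπ⟩ := exists_tru_path hd1 hTt1
  set S := subAt π (fe t2) with hS
  have hSp : Perfect S (d2 - d1) := by
    have := hd2.subAt (p := π) (by omega)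
    rwa [hπl] at this
  have hSF : ¬ S.hasFls := not_hasFls_subAt hFt2 π
  have hZ1 : fe s1 = S.subst (fe s2) ((fe s2).subst .fls .fls) := by
    have e1 : subAt π ((fe t1).subst (fe s1) ((fe s1).subst .fls .fls)) = fe s1 := by
      rw [subAt_subst hd1 (le_of_eq hπl), hπ, subst_tru]
    have e2 : subAt π ((fe t2).subst (fe s2) ((fe s2).subst .fls .fls)) =
        S.subst (fe s2) ((fe s2).subst .fls .fls) :=
      subAt_subst hd2 (by omega) _ _
    rw [← e1, h, e2]
  have hall : ∀ ρ : List Bool, ρ.length = d2 - d1 → subAt ρ (fe s1) = fe s2 := by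
    intro ρ hρ
    rw [hZ1, subAt_subst hSp (by omega)]
    rcases subAt_full hSp hρ with he | he
    · rw [he, subst_tru]
    · exact absurd (hasFls_of_subAt_fls he) hSF
  have hperf : Perfect (fe s1) ((d2 - d1) + m2) := by
    rw [hZ1]; exact hSp.subst hm2p hm2p.bar
  exact no_uniform hs1 hperf (by omega) (by omega) hall

end FEInj
/-- fe is injective on FEL Normal Forms. -/
theorem fe_injective_on_fnf (A : Type) [Countable A] (P Q : FTerm A)
    (hP : IsFNF P) (hQ : IsFNF Q) (h : fe P = fe Q) : P = Q := by
  open FEInj in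
  cases hP with
  | t ht1 =>
    cases hQ with
    | t ht2 => exact FEInj.feT_inj ht1 ht2 h
    | f hf2 =>
      exact absurd (h ▸ (FEInj.feT_facts ht1).1) (FEInj.feF_facts hf2).2.1
    | @ts t2 s2 ht2 hs2 =>
      obtain ⟨hTs2, hFs2, -⟩ := FEInj.star_facts hs2
      have : (fe (FTerm.and t2 s2)).hasFls := by
        rw [FEInj.fe_and]
        exact FEInj.hasFls_subst_both hFs2 (FEInj.hasFls_bar _) _
      exact absurd (h ▸ this) (FEInj.feT_facts ht1).2.1
  | f hf1 =>
    cases hQ with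
    | t ht2 =>
      exact absurd (h ▸ (FEInj.feF_facts hf1).1) (FEInj.feT_facts ht2).2.1
    | f hf2 => exact FEInj.feF_inj hf1 hf2 h
    | @ts t2 s2 ht2 hs2 =>
      obtain ⟨hTs2, hFs2, -⟩ := FEInj.star_facts hs2
      have : (fe (FTerm.and t2 s2)).hasTru := by
        rw [FEInj.fe_and]
        exact FEInj.hasTru_subst_left (FEInj.feT_facts ht2).1 hTs2 _
      exact absurd (h ▸ this) (FEInj.feF_facts hf1).2.1
  | @ts t1 s1 ht1 hs1 =>
    cases hQ with
    | t ht2 =>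
      obtain ⟨hTs1, hFs1, -⟩ := FEInj.star_facts hs1
      have : (fe (FTerm.and t1 s1)).hasFls := by
        rw [FEInj.fe_and]
        exact FEInj.hasFls_subst_both hFs1 (FEInj.hasFls_bar _) _
      exact absurd (h ▸ this) (FEInj.feT_facts ht2).2.1
    | f hf2 =>
      obtain ⟨hTs1, hFs1, -⟩ := FEInj.star_facts hs1
      have : (fe (FTerm.and t1 s1)).hasTru := by
        rw [FEInj.fe_and]
        exact FEInj.hasTru_subst_left (FEInj.feT_facts ht1).1 hTs1 _
      exact absurd (h ▸ this) (FEInj.feF_facts hf2).2.1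
    | @ts t2 s2 ht2 hs2 =>
      obtain ⟨hTt1, hFt1, d1, hd1⟩ := FEInj.feT_facts ht1
      obtain ⟨hTt2, hFt2, d2, hd2⟩ := FEInj.feT_facts ht2
      obtain ⟨hTs1, hFs1, m1, hm11, hm1p⟩ := FEInj.star_facts hs1
      obtain ⟨hTs2, hFs2, m2, hm21, hm2p⟩ := FEInj.star_facts hs2
      rcases lt_trichotomy d1 d2 with hlt | heq | hgt
      · exact absurd h (fun h => FEInj.ts_lt ht1 hs1 ht2 hs2 hd1 hd2 hlt h)
      · subst heq
        rw [FEInj.fe_and, FEInj.fe_and] at h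
        have hne1 : fe s1 ≠ (fe s2).subst .fls .fls :=
          fun e => FEInj.not_hasTru_bar (fe s2) (e ▸ hTs1)
        have hne2 : (fe s1).subst .fls .fls ≠ fe s2 :=
          fun e => FEInj.not_hasTru_bar (fe s1) (e.symm ▸ hTs2)
        obtain ⟨er, ht, -⟩ := FEInj.subst_cancel hd1 hd2 hne1 hne2 h
        rw [FEInj.feT_inj ht1 ht2 er, FEInj.star_inj' hs1 hs2 (ht hTt1)]
      · exact absurd h.symm (fun h => FEInj.ts_lt ht2 hs2 ht1 hs1 hd2 hd1 hgt h)
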